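/- arXiv:1909.11319 — 2 statements merged into one kernel-verified Lean document; each statement's English description precedes it below -/
import Mathlib

section
/- Let a be a nonzero integer and let b, c ≥ 1 be integers. Then [a, −2, …, −2, −4, −2, …, −2] (with b copies of −2 before the entry −4 and c copies of −2 after it) = [a + 1, b + 1, −2, c + 1]. -/
/-- The (subtractive) continued fraction value of a finite list of rationals:
`cf [] = 0` and `cf (a :: t) = (a - cf t)⁻¹`. -/
def cf : List ℚ → ℚ
  | [] => 0
  | a :: t => (a - cf t)⁻¹

/-!
Under `x ↦ (1 + x)⁻¹`, prepending an entry `-2` to a list whose value exceeds `-1` becomes the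
translation by `1`, so a block of `b` entries `-2` just adds `b`. Computing
`(1 + [-2, …, -2, -4, -2, …, -2])⁻¹` this way gives `b + 1 + 1 / (2 + 1 / (c + 1))`, which is
`[b + 1, -2, c + 1]⁻¹`. Hence `1 + [-2, …, -4, …, -2] = [b + 1, -2, c + 1]`, and prepending `a`,
respectively `a + 1`, to the two lists gives equal values.
-/

@[simp] lemma cf_nil : cf [] = 0 := rfl

@[simp] lemma cf_cons (a : ℚ) (t : List ℚ) : cf (a :: t) = (a - cf t)⁻¹ := rfl

section NegCons

variable {m : ℚ} {l : List ℚ}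

lemma one_add_cf_neg_cons (h : cf l + m ≠ 0) :
    1 + cf (-m :: l) = (cf l + m - 1) / (cf l + m) := by
  have : -m - cf l ≠ 0 := by contrapose! h; linarith
  rw [cf_cons]
  field_simp
  ring

lemma one_add_cf_neg_cons_pos (hm : 2 ≤ m) (hl : 0 < 1 + cf l) : 0 < 1 + cf (-m :: l) := by
  rw [one_add_cf_neg_cons (by linarith)]
  apply div_pos <;> linarith

lemma inv_one_add_cf_neg_cons (hm : 2 ≤ m) (hl : 0 < 1 + cf l) :
    (1 + cf (-m :: l))⁻¹ = 1 + (cf l + m - 1)⁻¹ := by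
  have : cf l + m - 1 ≠ 0 := by linarith
  rw [one_add_cf_neg_cons (by linarith), inv_div]
  field_simp
  ring

end NegCons

section ReplicateNegTwo

variable {l : List ℚ}

lemma one_add_cf_replicate_neg_two_append_pos (n : ℕ) (hl : 0 < 1 + cf l) :
    0 < 1 + cf (List.replicate n (-2) ++ l) := by
  induction n with
  | zero => simpa using hl
  | succ n ih => exact one_add_cf_neg_cons_pos le_rfl ih

lemma inv_one_add_cf_replicate_neg_two_append (n : ℕ) (hl : 0 < 1 + cf l) :
    (1 + cf (List.replicate n (-2) ++ l))⁻¹ = (1 + cf l)⁻¹ + n := by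
  induction n with
  | zero => simp
  | succ n ih =>
    rw [List.replicate_succ, List.cons_append,
      inv_one_add_cf_neg_cons le_rfl (one_add_cf_replicate_neg_two_append_pos n hl),
      show cf (List.replicate n (-2) ++ l) + 2 - 1 = 1 + cf (List.replicate n (-2) ++ l) by ring,
      ih]
    push_cast
    ring

end ReplicateNegTwo

lemma one_add_cf_replicate_neg_four_replicate (b c : ℕ) :
    1 + cf (List.replicate b (-2) ++ (-4) :: List.replicate c (-2)) =
      cf [(b : ℚ) + 1, -2, (c : ℚ) + 1] := by
  have hpos : 0 < 1 + cf (List.replicate c (-2)) := by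
    simpa using one_add_cf_replicate_neg_two_append_pos c (l := []) (by simp)
  have hc : 1 + cf (List.replicate c (-2)) = ((c : ℚ) + 1)⁻¹ := by
    rw [← inv_eq_iff_eq_inv]
    simpa [add_comm] using inv_one_add_cf_replicate_neg_two_append c (l := []) (by simp)
  rw [← inv_inj,
    inv_one_add_cf_replicate_neg_two_append b (one_add_cf_neg_cons_pos (m := 4) (by norm_num) hpos),
    inv_one_add_cf_neg_cons (m := 4) (by norm_num) hpos]
  simp only [cf_cons, cf_nil, sub_zero, inv_inv]
  rw [show cf (List.replicate c (-2)) + 4 - 1 = ((c : ℚ) + 1)⁻¹ + 2 by linarith,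
    show (-2 : ℚ) - ((c : ℚ) + 1)⁻¹ = -(((c : ℚ) + 1)⁻¹ + 2) by ring, inv_neg]
  ring

theorem stmt_5_general (a : ℤ) (b c : ℕ) :
    cf ((a : ℚ) :: (List.replicate b (-2 : ℚ) ++ (-4 : ℚ) :: List.replicate c (-2 : ℚ))) =
      cf [(a : ℚ) + 1, (b : ℚ) + 1, -2, (c : ℚ) + 1] := by
  rw [cf_cons, cf_cons ((a : ℚ) + 1), ← one_add_cf_replicate_neg_four_replicate]
  ring_nf

theorem stmt_5 (a : ℤ) (ha : a ≠ 0) (b c : ℕ) (hb : 1 ≤ b) (hc : 1 ≤ c) :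
    cf ((a : ℚ) :: (List.replicate b (-2 : ℚ) ++ (-4 : ℚ) :: List.replicate c (-2 : ℚ))) =
      cf [(a : ℚ) + 1, (b : ℚ) + 1, -2, (c : ℚ) + 1] :=
  stmt_5_general a b c
end

section
/- Let a be an even integer with a ≥ 4, and let b, c ≥ 1 be integers of opposite parity (b + c odd). Then the continued fraction value [a, 2, …, 2, 4, 2, …, 2] (with b copies of 2 before the entry 4 and c copies of 2 after it) equals [2m+1, 2n, 2, 2l−1] for some integers m ≥ 1, n ≤ −1, l ≤ −1, or equals [2m+1, 2n−1, 2, 2l] for some integers m ≥ 1, n ≤ −1, l ≤ −1. -/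
-- No hypothesis on `x * q - p` is needed: if it vanishes, both sides are `0` by `0⁻¹ = 0`.
lemma cf_cons_of_eq_div {t : List ℚ} {p q : ℚ} (h : cf t = p / q) (hq : q ≠ 0) (x : ℚ) :
    cf (x :: t) = q / (x * q - p) := by
  rw [cf, h, sub_div' hq, inv_div]

lemma cf_replicate_two (n : ℕ) : cf (List.replicate n 2) = n / (n + 1) := by
  induction n with
  | zero => simp [cf]
  | succ n ih =>
    rw [List.replicate_succ, cf_cons_of_eq_div ih (by positivity)]
    push_cast
    ring_nf

lemma cf_replicate_two_append_four (b c : ℕ) :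
    cf (List.replicate b 2 ++ 4 :: List.replicate c 2) =
      (b * (2 * c + 3) + c + 1) / ((b + 1) * (2 * c + 3) + c + 1) := by
  induction b with
  | zero =>
    rw [List.replicate_zero, List.nil_append, cf_cons_of_eq_div (cf_replicate_two c) (by positivity)]
    push_cast
    ring_nf
  | succ b ih =>
    rw [List.replicate_succ, List.cons_append, cf_cons_of_eq_div ih (by positivity)]
    push_cast
    ring_nf

lemma cf_neg_two_neg (b c : ℕ) :
    cf [-(b + 1), 2, -(c + 1)] = -(2 * c + 3) / ((b + 1) * (2 * c + 3) + c + 1) := by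
  have hc : (0 : ℚ) ≤ c := c.cast_nonneg
  have h₁ : cf [-(c + 1 : ℚ)] = 1 / -(c + 1) := by simp [cf]
  have h₂ := cf_cons_of_eq_div h₁ (by linarith) 2
  have h₃ := cf_cons_of_eq_div h₂ (by linarith) (-(b + 1))
  rw [h₃]
  ring_nf

lemma cf_cons_replicate_two_append_four (a : ℚ) (b c : ℕ) :
    cf (a :: (List.replicate b 2 ++ 4 :: List.replicate c 2)) =
      cf [a - 1, -(b + 1), 2, -(c + 1)] := by
  have hD : ((b : ℚ) + 1) * (2 * c + 3) + c + 1 ≠ 0 := by positivity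
  rw [cf_cons_of_eq_div (cf_replicate_two_append_four b c) hD,
    cf_cons_of_eq_div (cf_neg_two_neg b c) hD]
  ring_nf

theorem stmt_6 (a : ℤ) (ha : 4 ≤ a) (hae : Even a) (b c : ℕ)
    (hb : 1 ≤ b) (hc : 1 ≤ c) (hbc : Odd (b + c)) :
    (∃ m n l : ℤ, 1 ≤ m ∧ n ≤ -1 ∧ l ≤ -1 ∧
      cf ((a : ℚ) :: (List.replicate b (2 : ℚ) ++ (4 : ℚ) :: List.replicate c (2 : ℚ))) =
        cf [2 * (m : ℚ) + 1, 2 * (n : ℚ), 2, 2 * (l : ℚ) - 1]) ∨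
    (∃ m n l : ℤ, 1 ≤ m ∧ n ≤ -1 ∧ l ≤ -1 ∧
      cf ((a : ℚ) :: (List.replicate b (2 : ℚ) ++ (4 : ℚ) :: List.replicate c (2 : ℚ))) =
        cf [2 * (m : ℚ) + 1, 2 * (n : ℚ) - 1, 2, 2 * (l : ℚ)]) := by
  obtain ⟨t, rfl⟩ := hae
  rw [cf_cons_replicate_two_append_four]
  rcases Nat.even_or_odd c with ⟨k, rfl⟩ | ⟨k, rfl⟩
  · obtain ⟨j, rfl⟩ : ∃ j, b = 2 * j + 1 := ⟨b / 2, by grind⟩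
    refine .inl ⟨t - 1, -(j + 1), -k, by omega, by omega, by omega, ?_⟩
    push_cast
    ring_nf
  · obtain ⟨j, rfl⟩ : ∃ j, b = 2 * j := ⟨b / 2, by grind⟩
    refine .inr ⟨t - 1, -j, -(k + 1), by omega, by omega, by omega, ?_⟩
    push_cast
    ring_nf
end
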